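/- With α_{j,k} and ν_j as defined from the oscillator wave functions: if k is odd then α_{j,k} = 0 for all 0 < j ≤ k, and if k > 0 is even then α_{1,k} > 0; moreover α_{j,k} = α_{1,k} ν_j / ν_1 for 0 < j ≤ k. -/

import Mathlib

open MeasureTheory

/-- Physicists' Hermite polynomials. -/
noncomputable def hermiteP : ℕ → ℝ → ℝ
  | 0 => fun _ => 1
  | 1 => fun x => 2 * x
  | (n + 2) => fun x => 2 * x * hermiteP (n + 1) x - 2 * ((n : ℝ) + 1) * hermiteP n x

/-- The oscillator wave functions `φ_j(x) = (2^j j! √π)^{-1/2} e^{-x²/2} H_j(x)`. -/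
noncomputable def phi (j : ℕ) (x : ℝ) : ℝ :=
  (Real.sqrt (2 ^ j * (j.factorial : ℝ) * Real.sqrt Real.pi))⁻¹ *
    Real.exp (-x ^ 2 / 2) * hermiteP j x

/-- `ν_k = ∫ φ_{k-1}` for `k ≥ 1`, with the convention `ν_0 = 0`. -/
noncomputable def nu (k : ℕ) : ℝ :=
  if k = 0 then 0 else ∫ x : ℝ, phi (k - 1) x

/-- `α_{j,k} = ∫∫ φ_{k-1}(x) φ_{j-1}(y) sgn(x-y) dx dy` for `j, k ≥ 1`,
with the convention `α_{0,k} = α_{j,0} = 0`. -/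
noncomputable def alph (j k : ℕ) : ℝ :=
  if j = 0 ∨ k = 0 then 0
  else ∫ y : ℝ, ∫ x : ℝ, phi (k - 1) x * phi (j - 1) y * Real.sign (x - y)

/-! Write `h_m x = e^{-x²/2} H_m x`, so that `φ_m` is a positive multiple of `h_m`. Fix `n` and
put `g_m = ∫ h_m` and `a_m = ∫∫ h_n(x) h_m(y) sgn(x - y)`. Both sequences satisfy
`u_{m+1} = 2m u_{m-1}` for `m < n`: for `g` because `h_m' = m h_{m-1} - h_{m+1}/2` integrates to
zero, for `a` because moreover `∂_y ∫ h_n(x) sgn(x - y) dx = -2 h_n(y)`, so that integrating by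
parts leaves `4 ∫ h_m h_n`, which vanishes for `m ≠ n`. Hence `a_m g_0 = a_0 g_m` for `m ≤ n`,
the proportionality `α_{j,k} = α_{1,k} ν_j / ν_1`.

Since `g_1 = 0`, `g_m` vanishes for odd `m` and is positive for even `m`. The sign kernel is
antisymmetric, so `a_n = 0`, which forces `a_0 = 0` when `n` is even. When `n` is odd, the same
antisymmetry and `g_n = 0` kill the term `a_{n+1}`, and the recurrence at `m = n` reads
`2n a_{n-1} = 4 ∫ h_n² > 0`; hence `a_0 > 0`. -/

open Filter Polynomial Set Topology

lemma tendsto_eval_mul_exp_neg_mul_sq_cocompact (P : ℝ[X]) {b : ℝ} (hb : 0 < b) :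
    Tendsto (fun x => P.eval x * Real.exp (-b * x ^ 2)) (cocompact ℝ) (𝓝 0) := by
  induction P using Polynomial.induction_on' with
  | add p q hp hq => simpa [add_mul] using hp.add hq
  | monomial n a =>
    have h : Tendsto (fun x : ℝ => x ^ n * Real.exp (-b * x ^ 2)) (cocompact ℝ) (𝓝 0) := by
      rw [tendsto_zero_iff_norm_tendsto_zero]
      refine (tendsto_rpow_abs_mul_exp_neg_mul_sq_cocompact hb n).congr fun x => ?_
      simp [abs_of_pos (Real.exp_pos _), Real.rpow_natCast]
    simpa [mul_assoc] using h.const_mul a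

lemma integrable_eval_mul_exp_neg_mul_sq (P : ℝ[X]) {b : ℝ} (hb : 0 < b) :
    Integrable (fun x => P.eval x * Real.exp (-b * x ^ 2)) := by
  induction P using Polynomial.induction_on' with
  | add p q hp hq => simpa [add_mul] using! hp.add hq
  | monomial n a =>
    have h : Integrable (fun x : ℝ => x ^ n * Real.exp (-b * x ^ 2)) := by
      simpa [Real.rpow_natCast] using
        integrable_rpow_mul_exp_neg_mul_sq hb (s := n) (by linarith [n.cast_nonneg (α := ℝ)])
    simpa [mul_assoc] using h.const_mul a

lemma exists_norm_le_of_tendsto_cocompact {α E : Type*} [TopologicalSpace α]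
    [NormedAddCommGroup E] {f : α → E} (hf : Continuous f) (h : Tendsto f (cocompact α) (𝓝 0)) :
    ∃ C, ∀ x, ‖f x‖ ≤ C :=
  let g : ZeroAtInftyContinuousMap α E := ⟨⟨f, hf⟩, h⟩
  ⟨‖g.toBCF‖, g.toBCF.norm_coe_le_norm⟩

lemma Real.measurable_sign : Measurable Real.sign :=
  Measurable.ite measurableSet_Iio measurable_const
    (Measurable.ite measurableSet_Ioi measurable_const measurable_const)

lemma Real.norm_sign_le_one (r : ℝ) : ‖Real.sign r‖ ≤ 1 := by
  rcases Real.sign_apply_eq r with h | h | h <;> simp [h]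

section SignKernel

variable {f g : ℝ → ℝ}

lemma integrable_mul_sign_sub (hf : Integrable f) (y : ℝ) :
    Integrable (fun x => f x * Real.sign (x - y)) :=
  hf.mul_bdd (Real.measurable_sign.comp (measurable_id.sub_const y)).aestronglyMeasurable
    (ae_of_all _ fun _ => Real.norm_sign_le_one _)

lemma integral_mul_sign_sub (hf : Integrable f) (y : ℝ) :
    ∫ x, f x * Real.sign (x - y) = (∫ x, f x) - 2 * ∫ x in Iic y, f x := by
  have hg := integrable_mul_sign_sub hf y
  have hIic : ∫ x in Iic y, f x * Real.sign (x - y) = -∫ x in Iic y, f x := by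
    rw [integral_Iic_eq_integral_Iio, integral_Iic_eq_integral_Iio, ← integral_neg]
    exact setIntegral_congr_fun measurableSet_Iio fun x hx => by
      simp [Real.sign_of_neg (sub_neg.2 hx)]
  have hIoi : ∫ x in Ioi y, f x * Real.sign (x - y) = ∫ x in Ioi y, f x :=
    setIntegral_congr_fun measurableSet_Ioi fun x hx => by simp [Real.sign_of_pos (sub_pos.2 hx)]
  rw [← intervalIntegral.integral_Iic_add_Ioi hg.integrableOn hg.integrableOn,
    ← intervalIntegral.integral_Iic_add_Ioi (b := y) hf.integrableOn hf.integrableOn, hIic, hIoi]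
  ring

lemma hasDerivAt_integral_mul_sign_sub (hf : Integrable f) (hfc : Continuous f) (y : ℝ) :
    HasDerivAt (fun y => ∫ x, f x * Real.sign (x - y)) (-2 * f y) y := by
  have h : (fun y => ∫ x, f x * Real.sign (x - y)) =
      fun y => (∫ x, f x) - 2 * ((∫ x in Iic 0, f x) + ∫ x in (0 : ℝ)..y, f x) := by
    funext z
    rw [integral_mul_sign_sub hf, ← intervalIntegral.integral_Iic_sub_Iic hf.integrableOn
      hf.integrableOn]
    ring
  rw [h]
  refine ((((hfc.integral_hasStrictDerivAt 0 y).hasDerivAt.const_add _).const_mul 2).const_sub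
    _).congr_deriv ?_
  ring

lemma continuous_integral_mul_sign_sub (hf : Integrable f) (hfc : Continuous f) :
    Continuous (fun y => ∫ x, f x * Real.sign (x - y)) :=
  continuous_iff_continuousAt.2 fun y => (hasDerivAt_integral_mul_sign_sub hf hfc y).continuousAt

lemma norm_integral_mul_sign_sub_le (hf : Integrable f) (y : ℝ) :
    ‖∫ x, f x * Real.sign (x - y)‖ ≤ ∫ x, ‖f x‖ :=
  norm_integral_le_of_norm_le hf.norm (ae_of_all _ fun x => by
    rw [norm_mul]
    exact mul_le_of_le_one_right (norm_nonneg _) (Real.norm_sign_le_one _))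

lemma integrable_mul_integral_mul_sign_sub (hg : Integrable g) (hf : Integrable f)
    (hfc : Continuous f) : Integrable (fun y => g y * ∫ x, f x * Real.sign (x - y)) :=
  hg.mul_bdd (continuous_integral_mul_sign_sub hf hfc).aestronglyMeasurable
    (ae_of_all _ (norm_integral_mul_sign_sub_le hf))

noncomputable def signPairing (f g : ℝ → ℝ) : ℝ := ∫ y, ∫ x, f x * g y * Real.sign (x - y)

lemma signPairing_eq_integral (f g : ℝ → ℝ) :
    signPairing f g = ∫ y, g y * ∫ x, f x * Real.sign (x - y) := by
  unfold signPairing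
  congr 1
  funext y
  rw [← integral_const_mul]
  congr 1
  funext x
  ring

lemma signPairing_const_mul_left (c : ℝ) (f g : ℝ → ℝ) :
    signPairing (fun x => c * f x) g = c * signPairing f g := by
  simp only [signPairing, mul_assoc, integral_const_mul]

lemma signPairing_const_mul_right (c : ℝ) (f g : ℝ → ℝ) :
    signPairing f (fun y => c * g y) = c * signPairing f g := by
  rw [signPairing_eq_integral, signPairing_eq_integral, ← integral_const_mul]
  simp only [mul_assoc]

lemma signPairing_sub_right {g₁ g₂ : ℝ → ℝ} (hf : Integrable f) (hfc : Continuous f)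
    (hg₁ : Integrable g₁) (hg₂ : Integrable g₂) :
    signPairing f (fun y => g₁ y - g₂ y) = signPairing f g₁ - signPairing f g₂ := by
  simp only [signPairing_eq_integral, sub_mul]
  exact integral_sub (integrable_mul_integral_mul_sign_sub hg₁ hf hfc)
    (integrable_mul_integral_mul_sign_sub hg₂ hf hfc)

lemma signPairing_antisymm (hf : Integrable f) (hg : Integrable g) :
    signPairing f g = -signPairing g f := by
  have hint : Integrable (Function.uncurry fun y x => f x * g y * Real.sign (x - y))
      (volume.prod volume) := by
    refine ((hg.mul_prod hf).mul_bdd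
      (Real.measurable_sign.comp (measurable_snd.sub measurable_fst)).aestronglyMeasurable
      (ae_of_all _ fun _ => Real.norm_sign_le_one _)).congr (ae_of_all _ fun z => ?_)
    simp only [Function.uncurry, Function.comp_apply, Pi.sub_apply]
    ring
  rw [signPairing, integral_integral_swap hint, signPairing, ← integral_neg]
  congr 1
  funext x
  rw [← integral_neg]
  congr 1
  funext y
  rw [← neg_sub, Real.sign_neg]
  ring

lemma signPairing_of_hasDerivAt {g' : ℝ → ℝ} (hf : Integrable f) (hfc : Continuous f)
    (hg : ∀ x, HasDerivAt g (g' x) x) (hgi : Integrable g) (hg' : Integrable g')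
    (hgf : Integrable (fun x => g x * f x)) :
    signPairing f g' = 2 * ∫ x, g x * f x := by
  have h₁ := integrable_mul_integral_mul_sign_sub hg' hf hfc
  have h₂ : Integrable (fun x => g x * (-2 * f x)) :=
    (hgf.const_mul (-2)).congr (ae_of_all _ fun x => by ring)
  have h := integral_eq_zero_of_hasDerivAt_of_integrable
    (fun y => (hg y).mul (hasDerivAt_integral_mul_sign_sub hf hfc y)) (h₁.add h₂)
    (integrable_mul_integral_mul_sign_sub hgi hf hfc)
  rw [integral_add h₁ h₂] at h
  have hfg : ∫ x, g x * (-2 * f x) = -2 * ∫ x, g x * f x := by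
    rw [← integral_const_mul]
    congr 1
    funext x
    ring
  rw [signPairing_eq_integral]
  linarith

end SignKernel

lemma mul_eq_mul_of_recurrence {R : Type*} [CommRing R] {u v r : ℕ → R} {n : ℕ}
    (hu : ∀ m < n, u (m + 1) = r m * u (m - 1)) (hv : ∀ m < n, v (m + 1) = r m * v (m - 1)) :
    ∀ m ≤ n, u m * v 0 = u 0 * v m := by
  intro m
  induction m using Nat.strong_induction_on with
  | _ m ih =>
    intro hm
    rcases m with _ | m
    · ring
    · rw [hu m (by omega), hv m (by omega)]
      linear_combination r m * ih (m - 1) (by omega) (by omega)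

lemma hermiteP_succ (n : ℕ) (x : ℝ) :
    hermiteP (n + 1) x = 2 * x * hermiteP n x - 2 * n * hermiteP (n - 1) x := by
  cases n with
  | zero => simp [hermiteP]
  | succ n => simp [hermiteP]

lemma hasDerivAt_hermiteP (n : ℕ) (x : ℝ) :
    HasDerivAt (hermiteP n) (2 * n * hermiteP (n - 1) x) x := by
  induction n using Nat.twoStepInduction generalizing x with
  | zero => simpa [hermiteP] using hasDerivAt_const x (1 : ℝ)
  | one => simpa [hermiteP] using (hasDerivAt_id x).const_mul (2 : ℝ)
  | more n ih₀ ih₁ =>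
    have h := (((hasDerivAt_id' x).const_mul 2).mul (ih₁ x)).sub
      ((ih₀ x).const_mul (2 * ((n : ℝ) + 1)))
    refine h.congr_deriv ?_
    rw [show n + 2 - 1 = n + 1 by omega, Nat.add_sub_cancel, hermiteP_succ n]
    push_cast
    ring

lemma exists_eval_eq_hermiteP (n : ℕ) : ∃ P : ℝ[X], ∀ x, P.eval x = hermiteP n x := by
  induction n using Nat.twoStepInduction with
  | zero => exact ⟨1, fun x => by simp [hermiteP]⟩
  | one => exact ⟨2 * X, fun x => by simp [hermiteP]⟩
  | more n ih₀ ih₁ =>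
    obtain ⟨P, hP⟩ := ih₀
    obtain ⟨Q, hQ⟩ := ih₁
    exact ⟨2 * X * Q - C (2 * ((n : ℝ) + 1)) * P, fun x => by simp [hermiteP, hP, hQ]⟩

noncomputable def hermiteFun (n : ℕ) (x : ℝ) : ℝ := Real.exp (-x ^ 2 / 2) * hermiteP n x

lemma hasDerivAt_exp_neg_sq_div_two (x : ℝ) :
    HasDerivAt (fun x => Real.exp (-x ^ 2 / 2)) (-x * Real.exp (-x ^ 2 / 2)) x := by
  refine ((((hasDerivAt_id' x).fun_pow 2).fun_neg).div_const 2).exp.congr_deriv ?_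
  ring

lemma hasDerivAt_hermiteFun (m : ℕ) (x : ℝ) :
    HasDerivAt (hermiteFun m) (m * hermiteFun (m - 1) x - 2⁻¹ * hermiteFun (m + 1) x) x := by
  refine ((hasDerivAt_exp_neg_sq_div_two x).mul (hasDerivAt_hermiteP m x)).congr_deriv ?_
  rw [hermiteFun, hermiteFun, hermiteP_succ]
  ring

lemma hasDerivAt_exp_mul_hermiteFun (m : ℕ) (x : ℝ) :
    HasDerivAt (fun x => Real.exp (-x ^ 2 / 2) * hermiteFun m x)
      (-(Real.exp (-x ^ 2 / 2) * hermiteFun (m + 1) x)) x := by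
  refine ((hasDerivAt_exp_neg_sq_div_two x).mul (hasDerivAt_hermiteFun m x)).congr_deriv ?_
  rw [hermiteFun, hermiteFun, hermiteFun, hermiteP_succ]
  ring

lemma continuous_hermiteFun (n : ℕ) : Continuous (hermiteFun n) :=
  continuous_iff_continuousAt.2 fun x => (hasDerivAt_hermiteFun n x).continuousAt

lemma exists_hermiteFun_eq_eval_mul_exp (n : ℕ) :
    ∃ P : ℝ[X], hermiteFun n = fun x => P.eval x * Real.exp (-(1 / 2) * x ^ 2) := by
  obtain ⟨P, hP⟩ := exists_eval_eq_hermiteP n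
  refine ⟨P, funext fun x => ?_⟩
  rw [hermiteFun, hP, mul_comm]
  ring_nf

lemma integrable_hermiteFun (n : ℕ) : Integrable (hermiteFun n) := by
  obtain ⟨P, hP⟩ := exists_hermiteFun_eq_eval_mul_exp n
  exact hP ▸ integrable_eval_mul_exp_neg_mul_sq P (by norm_num)

lemma exists_norm_hermiteFun_le (n : ℕ) : ∃ C, ∀ x, ‖hermiteFun n x‖ ≤ C := by
  obtain ⟨P, hP⟩ := exists_hermiteFun_eq_eval_mul_exp n
  exact exists_norm_le_of_tendsto_cocompact (continuous_hermiteFun n)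
    (hP ▸ tendsto_eval_mul_exp_neg_mul_sq_cocompact P (by norm_num))

lemma integrable_hermiteFun_mul_hermiteFun (m n : ℕ) :
    Integrable (fun x => hermiteFun m x * hermiteFun n x) := by
  obtain ⟨C, hC⟩ := exists_norm_hermiteFun_le n
  exact (integrable_hermiteFun m).mul_bdd (continuous_hermiteFun n).aestronglyMeasurable
    (ae_of_all _ hC)

lemma integral_hermiteFun_succ_mul (m n : ℕ) :
    ∫ x, hermiteFun (m + 1) x * hermiteFun n x =
      2 * n * ∫ x, hermiteFun m x * hermiteFun (n - 1) x := by
  have hderiv : ∀ x, HasDerivAt (fun x => hermiteFun m x * hermiteFun n x)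
      (2 * n * (hermiteFun m x * hermiteFun (n - 1) x) - hermiteFun (m + 1) x * hermiteFun n x)
      x := by
    intro x
    have hfun : (fun x => hermiteFun m x * hermiteFun n x) =
        fun x => Real.exp (-x ^ 2 / 2) * hermiteFun m x * hermiteP n x := by
      funext y
      simp only [hermiteFun]
      ring
    rw [hfun]
    refine ((hasDerivAt_exp_mul_hermiteFun m x).mul (hasDerivAt_hermiteP n x)).congr_deriv ?_
    simp only [hermiteFun]
    ring
  have h := integral_eq_zero_of_hasDerivAt_of_integrable hderiv
    (((integrable_hermiteFun_mul_hermiteFun _ _).const_mul _).sub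
      (integrable_hermiteFun_mul_hermiteFun _ _))
    (integrable_hermiteFun_mul_hermiteFun m n)
  rw [integral_sub ((integrable_hermiteFun_mul_hermiteFun _ _).const_mul _)
    (integrable_hermiteFun_mul_hermiteFun _ _), integral_const_mul, sub_eq_zero] at h
  exact h.symm

lemma integral_hermiteFun_mul_eq_zero {m n : ℕ} (h : m ≠ n) :
    ∫ x, hermiteFun m x * hermiteFun n x = 0 := by
  wlog hlt : n < m generalizing m n
  · simp_rw [mul_comm (hermiteFun m _)]
    exact this h.symm (by omega)
  induction n generalizing m with
  | zero =>
    obtain ⟨m, rfl⟩ := Nat.exists_eq_add_of_lt hlt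
    rw [zero_add, integral_hermiteFun_succ_mul]
    simp
  | succ n ih =>
    obtain ⟨m, rfl⟩ : ∃ m', m = m' + 1 := ⟨m - 1, by omega⟩
    rw [integral_hermiteFun_succ_mul, Nat.add_sub_cancel, ih (by omega) (by omega), mul_zero]

lemma hermiteFun_zero (x : ℝ) : hermiteFun 0 x = Real.exp (-x ^ 2 / 2) := by
  simp [hermiteFun, hermiteP]

lemma integral_hermiteFun_mul_self_pos (n : ℕ) : 0 < ∫ x, hermiteFun n x * hermiteFun n x := by
  induction n with
  | zero =>
    refine integral_pos_of_integrable_nonneg_nonzero (x := 0)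
      ((continuous_hermiteFun 0).mul (continuous_hermiteFun 0))
      (integrable_hermiteFun_mul_hermiteFun 0 0) (fun x => mul_self_nonneg _) ?_
    simp [hermiteFun_zero]
  | succ n ih =>
    rw [integral_hermiteFun_succ_mul, Nat.add_sub_cancel]
    positivity

lemma integral_hermiteFun_succ (m : ℕ) :
    ∫ x, hermiteFun (m + 1) x = 2 * m * ∫ x, hermiteFun (m - 1) x := by
  have h := integral_eq_zero_of_hasDerivAt_of_integrable (hasDerivAt_hermiteFun m)
    (((integrable_hermiteFun _).const_mul _).sub ((integrable_hermiteFun _).const_mul _))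
    (integrable_hermiteFun m)
  rw [integral_sub ((integrable_hermiteFun _).const_mul _) ((integrable_hermiteFun _).const_mul _),
    integral_const_mul, integral_const_mul] at h
  linarith

lemma integral_hermiteFun_add_two (m : ℕ) :
    ∫ x, hermiteFun (m + 2) x = 2 * (m + 1) * ∫ x, hermiteFun m x := by
  rw [integral_hermiteFun_succ, Nat.add_sub_cancel]
  push_cast
  ring

lemma integral_hermiteFun_of_odd {n : ℕ} (hn : Odd n) : ∫ x, hermiteFun n x = 0 := by
  obtain ⟨r, rfl⟩ := hn
  induction r with
  | zero =>
    rw [integral_hermiteFun_succ]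
    simp
  | succ r ih => rw [show 2 * (r + 1) + 1 = 2 * r + 1 + 2 by ring, integral_hermiteFun_add_two, ih,
      mul_zero]

lemma integral_hermiteFun_pos_of_even {n : ℕ} (hn : Even n) : 0 < ∫ x, hermiteFun n x := by
  obtain ⟨r, rfl⟩ := hn
  induction r with
  | zero =>
    refine integral_pos_of_integrable_nonneg_nonzero (x := 0) (continuous_hermiteFun 0)
      (integrable_hermiteFun 0) (fun x => ?_) (by simp [hermiteFun_zero])
    rw [Pi.zero_apply, Nat.add_zero, hermiteFun_zero]
    positivity
  | succ r ih =>
    rw [show r + 1 + (r + 1) = r + r + 2 by ring, integral_hermiteFun_add_two]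
    positivity

lemma signPairing_hermiteFun_succ (m n : ℕ) :
    signPairing (hermiteFun n) (hermiteFun (m + 1)) =
      2 * m * signPairing (hermiteFun n) (hermiteFun (m - 1)) -
        4 * ∫ x, hermiteFun m x * hermiteFun n x := by
  have h := signPairing_of_hasDerivAt (integrable_hermiteFun n) (continuous_hermiteFun n)
    (hasDerivAt_hermiteFun m) (integrable_hermiteFun m)
    (((integrable_hermiteFun _).const_mul _).sub ((integrable_hermiteFun _).const_mul _))
    (integrable_hermiteFun_mul_hermiteFun m n)
  rw [signPairing_sub_right (integrable_hermiteFun n) (continuous_hermiteFun n)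
    ((integrable_hermiteFun _).const_mul _) ((integrable_hermiteFun _).const_mul _),
    signPairing_const_mul_right, signPairing_const_mul_right] at h
  linarith

lemma signPairing_hermiteFun_mul_integral {m n : ℕ} (h : m ≤ n) :
    signPairing (hermiteFun n) (hermiteFun m) * ∫ x, hermiteFun 0 x =
      signPairing (hermiteFun n) (hermiteFun 0) * ∫ x, hermiteFun m x :=
  mul_eq_mul_of_recurrence (u := fun m => signPairing (hermiteFun n) (hermiteFun m))
    (v := fun m => ∫ x, hermiteFun m x) (r := fun m => 2 * m)
    (fun m hm => by
      rw [signPairing_hermiteFun_succ, integral_hermiteFun_mul_eq_zero hm.ne, mul_zero, sub_zero])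
    (fun m _ => integral_hermiteFun_succ m) m h

lemma signPairing_hermiteFun_of_even {m n : ℕ} (hn : Even n) (h : m ≤ n) :
    signPairing (hermiteFun n) (hermiteFun m) = 0 := by
  have hg₀ := integral_hermiteFun_pos_of_even Even.zero
  have hdiag : signPairing (hermiteFun n) (hermiteFun n) = 0 := by
    have := signPairing_antisymm (integrable_hermiteFun n) (integrable_hermiteFun n)
    linarith
  have h₀ : signPairing (hermiteFun n) (hermiteFun 0) = 0 := by
    have := signPairing_hermiteFun_mul_integral (le_refl n)
    rw [hdiag, zero_mul, eq_comm, mul_eq_zero] at this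
    exact this.resolve_right (integral_hermiteFun_pos_of_even hn).ne'
  have := signPairing_hermiteFun_mul_integral h
  rw [h₀, zero_mul, mul_eq_zero] at this
  exact this.resolve_right hg₀.ne'

lemma signPairing_hermiteFun_zero_pos_of_odd {n : ℕ} (hn : Odd n) :
    0 < signPairing (hermiteFun n) (hermiteFun 0) := by
  have hg₀ := integral_hermiteFun_pos_of_even Even.zero
  have hnext : signPairing (hermiteFun n) (hermiteFun (n + 1)) = 0 := by
    have := signPairing_hermiteFun_mul_integral (Nat.le_succ n)
    rw [integral_hermiteFun_of_odd hn, mul_zero, mul_eq_zero] at this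
    rw [signPairing_antisymm (integrable_hermiteFun n) (integrable_hermiteFun _),
      this.resolve_right hg₀.ne', neg_zero]
  have hprev : 0 < signPairing (hermiteFun n) (hermiteFun (n - 1)) := by
    have := signPairing_hermiteFun_succ n n
    rw [hnext] at this
    have hpos : 0 < 2 * (n : ℝ) * signPairing (hermiteFun n) (hermiteFun (n - 1)) := by
      linarith [integral_hermiteFun_mul_self_pos n]
    exact pos_of_mul_pos_right hpos (by positivity)
  have := signPairing_hermiteFun_mul_integral (Nat.sub_le n 1)
  have hg : 0 < ∫ x, hermiteFun (n - 1) x :=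
    integral_hermiteFun_pos_of_even (Nat.Odd.sub_odd hn odd_one)
  exact pos_of_mul_pos_left (this ▸ mul_pos hprev hg₀) hg.le

noncomputable def hermiteNorm (n : ℕ) : ℝ :=
  (Real.sqrt (2 ^ n * (n.factorial : ℝ) * Real.sqrt Real.pi))⁻¹

lemma hermiteNorm_pos (n : ℕ) : 0 < hermiteNorm n := by
  unfold hermiteNorm
  have := Real.pi_pos
  positivity

lemma phi_eq (n : ℕ) : phi n = fun x => hermiteNorm n * hermiteFun n x := by
  funext x
  rw [phi, hermiteFun, hermiteNorm, mul_assoc]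

lemma alph_succ_succ (m n : ℕ) :
    alph (m + 1) (n + 1) =
      hermiteNorm n * hermiteNorm m * signPairing (hermiteFun n) (hermiteFun m) := by
  rw [alph, if_neg (by omega), Nat.add_sub_cancel, Nat.add_sub_cancel]
  change signPairing (phi n) (phi m) = _
  rw [phi_eq, phi_eq, signPairing_const_mul_left, signPairing_const_mul_right]
  ring

lemma nu_succ (m : ℕ) : nu (m + 1) = hermiteNorm m * ∫ x, hermiteFun m x := by
  rw [nu, if_neg (by omega), Nat.add_sub_cancel, phi_eq, integral_const_mul]

/-- if `k` is odd then `α_{j,k} = 0` for `0 < j ≤ k`; if `k > 0` is even then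
`α_{1,k} > 0`; and `α_{j,k} = α_{1,k} ν_j / ν_1` for `0 < j ≤ k`. -/
theorem stmt8 (k : ℕ) (hk : 0 < k) :
    (Odd k → ∀ j : ℕ, 0 < j → j ≤ k → alph j k = 0) ∧
    (Even k → 0 < alph 1 k) ∧
    (∀ j : ℕ, 0 < j → j ≤ k → alph j k = alph 1 k * nu j / nu 1) := by
  obtain ⟨n, rfl⟩ : ∃ n, k = n + 1 := ⟨k - 1, by omega⟩
  have hα₁ : alph 1 (n + 1) =
      hermiteNorm n * hermiteNorm 0 * signPairing (hermiteFun n) (hermiteFun 0) :=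
    alph_succ_succ 0 n
  refine ⟨fun hodd j hj hjk => ?_, fun heven => ?_, fun j hj hjk => ?_⟩
  · obtain ⟨m, rfl⟩ : ∃ m, j = m + 1 := ⟨j - 1, by omega⟩
    have hn : Even n := Nat.not_odd_iff_even.1 (Nat.odd_add_one.1 hodd)
    rw [alph_succ_succ, signPairing_hermiteFun_of_even hn (by omega), mul_zero]
  · have hn : Odd n := Nat.not_even_iff_odd.1 (Nat.even_add_one.1 heven)
    rw [hα₁]
    exact mul_pos (mul_pos (hermiteNorm_pos n) (hermiteNorm_pos 0))
      (signPairing_hermiteFun_zero_pos_of_odd hn)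
  · obtain ⟨m, rfl⟩ : ∃ m, j = m + 1 := ⟨j - 1, by omega⟩
    have hν₁ : nu 1 = hermiteNorm 0 * ∫ x, hermiteFun 0 x := nu_succ 0
    have := hermiteNorm_pos 0
    have := integral_hermiteFun_pos_of_even Even.zero
    rw [hα₁, hν₁, alph_succ_succ, nu_succ]
    field_simp
    linear_combination hermiteNorm n * hermiteNorm m *
      signPairing_hermiteFun_mul_integral (by omega : m ≤ n)
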